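/- The union of a Wheeler language L with a finite language F is Wheeler: if every monotone sequence in (Pref(L), ≺) is eventually constant modulo ≡_L and F is finite, then every monotone sequence in (Pref(L ∪ F), ≺) is eventually constant modulo ≡_{L ∪ F}. -/

import Mathlib

/-- The co-lexicographic (strict) order on strings. -/
def ListColex {α : Type*} [LinearOrder α] (x y : List α) : Prop :=
  List.Lex (· < ·) x.reverse y.reverse

/-- Weak co-lexicographic order. -/
def ColexLE {α : Type*} [LinearOrder α] (x y : List α) : Prop :=
  ListColex x y ∨ x = y

/-- A sequence of strings is monotone (weakly increasing or weakly decreasing)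
with respect to the co-lexicographic order. -/
def MonoColex {α : Type*} [LinearOrder α] (f : ℕ → List α) : Prop :=
  (∀ i, ColexLE (f i) (f (i + 1))) ∨ (∀ i, ColexLE (f (i + 1)) (f i))

/-- The set of prefixes of words of `L`. -/
def PrefL {α : Type*} (L : Set (List α)) : Set (List α) := {x | ∃ y, x ++ y ∈ L}

/-- The Myhill–Nerode right congruence `≡_L`. -/
def EqL {α : Type*} (L : Set (List α)) (x y : List α) : Prop :=
  ∀ z, x ++ z ∈ L ↔ y ++ z ∈ L

/-- The sequence characterization of Wheeler languages: every monotone sequence in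
`(Pref(L), ≺)` is eventually constant modulo `≡_L`. -/
def WheelerLike {α : Type*} [LinearOrder α] (L : Set (List α)) : Prop :=
  ∀ f : ℕ → List α, (∀ i, f i ∈ PrefL L) → MonoColex f →
    ∃ n : ℕ, ∀ h k : ℕ, n ≤ h → n ≤ k → EqL L (f h) (f k)

/-!
If a co-lexicographically monotone sequence is eventually constant there is nothing to prove.
Otherwise every word is a value of the sequence on an interval of indices only (a monotone
sequence cannot leave a value and come back to it), hence only finitely often. As `Pref(F)` is
finite, the sequence eventually leaves `Pref(F)`; from then on it runs in `Pref(L)`, and for words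
outside `Pref(F)` the congruences `≡_{L ∪ F}` and `≡_L` coincide.
-/

open Filter

section PartialOrder

variable {β : Type*} [PartialOrder β] {g : ℕ → β}

lemma eq_of_monotone_or_antitone_of_eq (hg : Monotone g ∨ Antitone g) {i j k : ℕ}
    (hji : j ≤ i) (hik : i ≤ k) (h : g j = g k) : g i = g j := by
  rcases hg with hg | hg
  · exact le_antisymm (h ▸ hg hik) (hg hji)
  · exact le_antisymm (hg hji) (h ▸ hg hik)

lemma eventually_ne_of_monotone_or_antitone (hg : Monotone g ∨ Antitone g)
    (hc : ¬ EventuallyConst g atTop) (b : β) : ∀ᶠ i in atTop, g i ≠ b := by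
  by_contra hb
  have hfreq : ∃ᶠ i in atTop, g i = b := (not_eventually.1 hb).mono fun _ => not_not.1
  obtain ⟨j, -, hj⟩ := frequently_atTop.1 hfreq 0
  have hleave : ∀ n, ∃ i, n ≤ i ∧ g i ≠ g n := by simpa [eventuallyConst_atTop] using hc
  obtain ⟨i, hji, hi⟩ := hleave j
  obtain ⟨k, hik, hk⟩ := frequently_atTop.1 hfreq i
  exact hi (eq_of_monotone_or_antitone_of_eq hg hji hik (hj.trans hk.symm))

end PartialOrder

section Colex

variable {α : Type*} [LinearOrder α]

lemma colexLE_iff_reverse_le {x y : List α} : ColexLE x y ↔ x.reverse ≤ y.reverse := by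
  rw [le_iff_lt_or_eq, List.reverse_inj]
  rfl

namespace MonoColex

variable {f : ℕ → List α}

lemma monotone_or_antitone (hf : MonoColex f) :
    Monotone (List.reverse ∘ f) ∨ Antitone (List.reverse ∘ f) := by
  simp only [MonoColex, colexLE_iff_reverse_le] at hf
  exact hf.imp monotone_nat_of_le_succ antitone_nat_of_succ_le

lemma eventually_ne (hf : MonoColex f) (hc : ¬ EventuallyConst f atTop) (s : List α) :
    ∀ᶠ i in atTop, f i ≠ s := by
  have hrev : ¬ EventuallyConst (List.reverse ∘ f) atTop := fun h =>
    hc (by simpa [Function.comp_def] using h.comp List.reverse)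
  exact (eventually_ne_of_monotone_or_antitone hf.monotone_or_antitone hrev s.reverse).mono
    fun i hi h => hi (congrArg List.reverse h)

lemma comp_add_left (hf : MonoColex f) (N : ℕ) : MonoColex fun i => f (N + i) :=
  hf.imp (fun h i => h (N + i)) (fun h i => h (N + i))

end MonoColex

end Colex

section Languages

variable {α : Type*} {L F : Set (List α)} {x y : List α}

lemma Set.Finite.prefL (hF : F.Finite) : (PrefL F).Finite := by
  refine (hF.biUnion fun y _ => y.inits.finite_toSet).subset ?_
  rintro x ⟨z, hz⟩
  exact Set.mem_biUnion hz (by simp [List.mem_inits])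

lemma mem_prefL_of_mem_prefL_union (hx : x ∈ PrefL (L ∪ F)) (hxF : x ∉ PrefL F) :
    x ∈ PrefL L := by
  obtain ⟨z, hz | hz⟩ := hx
  · exact ⟨z, hz⟩
  · exact absurd ⟨z, hz⟩ hxF

lemma EqL.union_of_notMem_prefL (h : EqL L x y) (hx : x ∉ PrefL F) (hy : y ∉ PrefL F) :
    EqL (L ∪ F) x y := fun z => by
  have hxz : x ++ z ∉ F := fun hz => hx ⟨z, hz⟩
  have hyz : y ++ z ∉ F := fun hz => hy ⟨z, hz⟩
  simp only [Set.mem_union, hxz, hyz, or_false, h z]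

lemma WheelerLike.exists_eqL_of_eventually_mem [LinearOrder α] (hL : WheelerLike L)
    {f : ℕ → List α} (hf : MonoColex f) (hfL : ∀ᶠ i in atTop, f i ∈ PrefL L) :
    ∃ n, ∀ h k, n ≤ h → n ≤ k → EqL L (f h) (f k) := by
  obtain ⟨N, hN⟩ := eventually_atTop.1 hfL
  obtain ⟨n, hn⟩ := hL (fun i => f (N + i)) (fun i => hN _ (Nat.le_add_right N i))
    (hf.comp_add_left N)
  refine ⟨N + n, fun h k hh hk => ?_⟩
  have := hn (h - N) (k - N) (by omega) (by omega)
  rwa [Nat.add_sub_cancel' (by omega : N ≤ h), Nat.add_sub_cancel' (by omega : N ≤ k)] at this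

end Languages

theorem wheeler_union_finite_general {α : Type*} [LinearOrder α]
    (L F : Set (List α)) (hL : WheelerLike L) (hF : F.Finite) :
    WheelerLike (L ∪ F) := by
  intro f hf hmono
  by_cases hc : EventuallyConst f atTop
  · obtain ⟨n, hn⟩ := eventuallyConst_atTop.1 hc
    exact ⟨n, fun h k hh hk z => by rw [hn h hh, hn k hk]⟩
  have hout : ∀ᶠ i in atTop, f i ∉ PrefL F :=
    (hF.prefL.eventually_all.2 fun s _ => hmono.eventually_ne hc s).mono
      fun i hi hmem => hi _ hmem rfl
  obtain ⟨n, hn⟩ := hL.exists_eqL_of_eventually_mem hmono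
    (hout.mono fun i => mem_prefL_of_mem_prefL_union (hf i))
  obtain ⟨m, hm⟩ := eventually_atTop.1 hout
  refine ⟨max n m, fun h k hh hk => ?_⟩
  rw [max_le_iff] at hh hk
  exact (hn h k hh.1 hk.1).union_of_notMem_prefL (hm h hh.2) (hm k hk.2)

/-- The union of a Wheeler language with a finite language is Wheeler. -/
theorem wheeler_union_finite {α : Type*} [Fintype α] [LinearOrder α]
    (L F : Set (List α)) (hL : WheelerLike L) (hF : F.Finite) :
    WheelerLike (L ∪ F) :=
  wheeler_union_finite_general L F hL hF
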